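/- For every integer n ≥ 2 and every i ∈ ℕ, as real numbers (where ω = n + √(n²−1), so ω^{−1} = n − √(n²−1)): (a i : ℝ) = (ω^i + ω^{−i})/2, (b i : ℝ) = (ω^i − ω^{−i})/(2√(n²−1)), (c i : ℝ) = ((ω+1)·ω^i − (ω^{−1}+1)·ω^{−i})/(2√(n²−1)), and (d i : ℝ) = ((1−ω^{−1})·ω^i + (ω−1)·ω^{−i})/(2√(n²−1)). -/

import Mathlib

/-- The solution of x 0 = x0, x 1 = x1, x (i+2) = 2n·x (i+1) − x i. -/
def rec2 (n : ℕ) (x0 x1 : ℤ) : ℕ → ℤ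
  | 0 => x0
  | 1 => x1
  | i + 2 => 2 * n * rec2 n x0 x1 (i + 1) - rec2 n x0 x1 i

/-- a i : a 0 = 1, a 1 = n. -/
def sa (n : ℕ) : ℕ → ℤ := rec2 n 1 n
/-- b i : b 0 = 0, b 1 = 1. -/
def sb (n : ℕ) : ℕ → ℤ := rec2 n 0 1
/-- c i : c 0 = 1, c 1 = 2n+1. -/
def sc (n : ℕ) : ℕ → ℤ := rec2 n 1 (2 * n + 1)
/-- d i : d 0 = 1, d 1 = 1. -/
def sd (n : ℕ) : ℕ → ℤ := rec2 n 1 1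

/-- √(n²−1). -/
noncomputable def sqn (n : ℕ) : ℝ := Real.sqrt ((n : ℝ)^2 - 1)

/-- ω = n + √(n²−1). -/
noncomputable def om (n : ℕ) : ℝ := n + sqn n

/-! Both roots `ω, ω⁻¹` of `X² - 2nX + 1` give solutions `ωⁱ` of the recurrence, and every solution
is the combination of the two fitting the initial values. For `ω = n + √(n²-1)` the inverse root is
`n - √(n²-1)`, and the four closed forms are this Binet formula for the four pairs of initial
values. -/

theorem rec2_eq_of_sq_eq {R : Type*} [CommRing R] {n : ℕ} {x0 x1 : ℤ} {r s A B : R}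
    (hr : r ^ 2 = 2 * n * r - 1) (hs : s ^ 2 = 2 * n * s - 1)
    (h0 : (x0 : R) = A + B) (h1 : (x1 : R) = A * r + B * s) (i : ℕ) :
    (rec2 n x0 x1 i : R) = A * r ^ i + B * s ^ i := by
  induction i using Nat.twoStepInduction with
  | zero => simpa [rec2] using h0
  | one => simpa [rec2] using h1
  | more m ih0 ih1 =>
    rw [rec2, Int.cast_sub, Int.cast_mul, ih0, ih1]
    push_cast
    linear_combination -(A * r ^ m) * hr - (B * s ^ m) * hs

theorem rec2_eq_binet {K : Type*} [Field K] {n : ℕ} {ω : K}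
    (hsum : ω + ω⁻¹ = 2 * n) (hne : ω ≠ ω⁻¹) (x0 x1 : ℤ) (i : ℕ) :
    (rec2 n x0 x1 i : K) =
      ((x1 - x0 * ω⁻¹) * ω ^ (i : ℤ) - (x1 - x0 * ω) * ω ^ (-(i : ℤ))) / (ω - ω⁻¹) := by
  have hω : ω ≠ 0 := fun h => hne (by simp [h])
  have hd : ω - ω⁻¹ ≠ 0 := sub_ne_zero.mpr hne
  have hr : ω ^ 2 = 2 * n * ω - 1 := by
    rw [← hsum]; field_simp; ring
  have hs : ω⁻¹ ^ 2 = 2 * n * ω⁻¹ - 1 := by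
    rw [← hsum]; field_simp; ring
  rw [zpow_neg, zpow_natCast, ← inv_pow,
    rec2_eq_of_sq_eq hr hs (A := (x1 - x0 * ω⁻¹) / (ω - ω⁻¹)) (B := -(x1 - x0 * ω) / (ω - ω⁻¹))
      (by rw [← add_div]; exact eq_div_of_mul_eq hd (by ring))
      (by rw [div_mul_eq_mul_div, div_mul_eq_mul_div, ← add_div]; exact eq_div_of_mul_eq hd (by ring))]
  ring

theorem sqn_sq {n : ℕ} (hn : 1 ≤ n) : sqn n ^ 2 = (n : ℝ) ^ 2 - 1 := by
  have : (1 : ℝ) ≤ n := by exact_mod_cast hn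
  rw [sqn, Real.sq_sqrt (by nlinarith)]

theorem sqn_pos {n : ℕ} (hn : 2 ≤ n) : 0 < sqn n := by
  have : (2 : ℝ) ≤ n := by exact_mod_cast hn
  exact Real.sqrt_pos.mpr (by nlinarith)

theorem om_inv {n : ℕ} (hn : 1 ≤ n) : (om n)⁻¹ = n - sqn n := by
  refine inv_eq_of_mul_eq_one_right ?_
  rw [om]
  linear_combination -(sqn_sq hn)

theorem stmt_17 (n : ℕ) (hn : 2 ≤ n) (i : ℕ) :
    (sa n i : ℝ) = (om n ^ (i : ℤ) + om n ^ (-(i : ℤ))) / 2 ∧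
    (sb n i : ℝ) = (om n ^ (i : ℤ) - om n ^ (-(i : ℤ))) / (2 * sqn n) ∧
    (sc n i : ℝ) = ((om n + 1) * om n ^ (i : ℤ) - ((om n)⁻¹ + 1) * om n ^ (-(i : ℤ))) /
      (2 * sqn n) ∧
    (sd n i : ℝ) = ((1 - (om n)⁻¹) * om n ^ (i : ℤ) + (om n - 1) * om n ^ (-(i : ℤ))) /
      (2 * sqn n) := by
  have hinv := om_inv (n := n) (by omega)
  have hsqn := (sqn_pos hn).ne'
  have hdiff : om n - (om n)⁻¹ = 2 * sqn n := by rw [hinv, om]; ring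
  have hsum : om n + (om n)⁻¹ = 2 * n := by rw [hinv, om]; ring
  have hne : om n ≠ (om n)⁻¹ := fun h => hsqn (by linear_combination -hdiff / 2 + h / 2)
  simp only [sa, sb, sc, sd, rec2_eq_binet hsum hne, hdiff]
  push_cast
  refine ⟨?_, ?_, ?_, ?_⟩
  · rw [hinv, om]; field_simp; ring
  · congr 1; ring
  · congr 1; rw [hinv, om]; ring
  · congr 1; rw [hinv, om]; ring
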